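/- arXiv:1601.03467 — 2 statements merged into one kernel-verified Lean document; each statement's English description precedes it below -/
import Mathlib

section
/- For all x in R^n, Î(x) = 1 - A(|x|), where A(s) := 2γ_n ∫_0^1 (1-u^2)^{(n-1)/2} (sin(us/2))^2 du and γ_n = (∫_0^1 (1-u^2)^{(n-1)/2} du)^{-1}. -/
open MeasureTheory Metric

noncomputable def unitBallIndicator (n : ℕ) : EuclideanSpace ℝ (Fin n) → ℝ :=
  Set.indicator (ball (0 : EuclideanSpace ℝ (Fin n)) 1)
    (fun _ => ((volume (ball (0 : EuclideanSpace ℝ (Fin n)) 1)).toReal)⁻¹)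

noncomputable def gammaN (n : ℕ) : ℝ :=
  (∫ u in (0:ℝ)..1, (1 - u ^ 2) ^ (((n : ℝ) - 1) / 2))⁻¹

noncomputable def Afun (n : ℕ) (s : ℝ) : ℝ :=
  2 * gammaN n *
    ∫ u in (0:ℝ)..1, (1 - u ^ 2) ^ (((n : ℝ) - 1) / 2) * (Real.sin (u * s / 2)) ^ 2

/-!
Rotating `ξ` onto `‖ξ‖ e₀` by a reflection turns `Î(ξ)` into the mean of `exp (-i ‖ξ‖ x₀)` over
the unit ball. By Fubini, the slice `x₀ = t` of the ball is an `(n-1)`-ball of radius `√(1 - t²)`,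
so this mean is `∫ (1 - t²)^((n-1)/2) exp (-i ‖ξ‖ t) dt` over `[-1, 1]` divided by its value at
`ξ = 0`, the same slicing giving the volume of the ball. Symmetrizing in `t` leaves
`cos (‖ξ‖ t) = 1 - 2 sin² (‖ξ‖ t / 2)`.
-/

theorem Real.cos_eq_one_sub_two_mul_sin_half_sq (x : ℝ) :
    Real.cos x = 1 - 2 * Real.sin (x / 2) ^ 2 := by
  rw [Real.sin_sq_eq_half_sub]
  ring_nf

theorem Real.rpow_natCast_div_two_eq_sqrt_pow {x : ℝ} (hx : 0 ≤ x) (m : ℕ) :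
    x ^ ((m : ℝ) / 2) = √x ^ m := by
  rw [Real.sqrt_eq_rpow, ← Real.rpow_mul_natCast hx]
  ring_nf

theorem integral_neg_self_eq_integral_add_comp_neg {E : Type*} [NormedAddCommGroup E]
    [NormedSpace ℝ E] {f : ℝ → E} (hf : Continuous f) (a : ℝ) :
    ∫ x in -a..a, f x = ∫ x in 0..a, (f x + f (-x)) := by
  have hneg : ∫ x in -a..0, f x = ∫ x in 0..a, f (-x) := by
    rw [intervalIntegral.integral_comp_neg, neg_zero]
  rw [← intervalIntegral.integral_add_adjacent_intervals (b := 0) (hf.intervalIntegrable _ _)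
      (hf.intervalIntegrable _ _), hneg, add_comm]
  exact (intervalIntegral.integral_add (hf.intervalIntegrable 0 a)
    ((hf.comp continuous_neg).intervalIntegrable 0 a)).symm

theorem norm_mul_inner_reflection_eq_inner {F : Type*} [NormedAddCommGroup F]
    [InnerProductSpace ℝ F] [CompleteSpace F] {u : F} (hu : ‖u‖ = 1) (ξ x : F) :
    ‖ξ‖ * inner ℝ (Submodule.reflection (ℝ ∙ (ξ - ‖ξ‖ • u))ᗮ x) u = inner ℝ x ξ := by
  set R := Submodule.reflection (ℝ ∙ (ξ - ‖ξ‖ • u))ᗮ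
  have hξ : R ξ = ‖ξ‖ • u := Submodule.reflection_sub (by rw [norm_smul, hu, norm_norm, mul_one])
  rw [← real_inner_smul_right, ← hξ, R.inner_map_map]

theorem integral_indicator_ball_comp_inner_eq_norm_mul_apply {ι E : Type*} [Fintype ι]
    [NormedAddCommGroup E] [NormedSpace ℝ E] (φ : ℝ → E) (r : ℝ) (ξ : EuclideanSpace ℝ ι)
    (i : ι) :
    ∫ x, (ball (0 : EuclideanSpace ℝ ι) r).indicator (fun x => φ (inner ℝ x ξ)) x =
      ∫ x, (ball (0 : EuclideanSpace ℝ ι) r).indicator (fun x => φ (‖ξ‖ * x i)) x := by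
  classical
  set R := Submodule.reflection (ℝ ∙ (ξ - ‖ξ‖ • EuclideanSpace.single i (1 : ℝ)))ᗮ
  have hR : ∀ x, ‖ξ‖ * R x i = inner ℝ x ξ := fun x => by
    simpa [EuclideanSpace.inner_single_right] using
      norm_mul_inner_reflection_eq_inner (u := EuclideanSpace.single i (1 : ℝ)) (by simp) ξ x
  refine Eq.trans ?_ (R.measurePreserving.integral_comp R.toHomeomorph.measurableEmbedding _)
  refine integral_congr_ae (.of_forall fun x => ?_)
  simp only [Set.indicator_apply, mem_ball_zero_iff, LinearIsometryEquiv.norm_map, hR]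

noncomputable def euclideanSpaceSuccEquiv (m : ℕ) :
    EuclideanSpace ℝ (Fin (m + 1)) ≃ᵐ ℝ × EuclideanSpace ℝ (Fin m) :=
  (MeasurableEquiv.toLp 2 _).symm.trans <|
    (MeasurableEquiv.piFinSuccAbove (fun _ => ℝ) 0).trans <|
      (MeasurableEquiv.refl ℝ).prodCongr (MeasurableEquiv.toLp 2 _)

section Slicing

variable {m : ℕ}

theorem measurePreserving_euclideanSpaceSuccEquiv :
    MeasurePreserving (euclideanSpaceSuccEquiv m) :=
  (EuclideanSpace.volume_preserving_symm_measurableEquiv_toLp _).trans <|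
    (volume_preserving_piFinSuccAbove (fun _ => ℝ) 0).trans <|
      (MeasurePreserving.id volume).prod
        (EuclideanSpace.volume_preserving_symm_measurableEquiv_toLp _).symm

@[simp]
theorem euclideanSpaceSuccEquiv_symm_apply_zero (t : ℝ) (y : EuclideanSpace ℝ (Fin m)) :
    (euclideanSpaceSuccEquiv m).symm (t, y) 0 = t := by
  simp [euclideanSpaceSuccEquiv, MeasurableEquiv.prodCongr]

theorem norm_euclideanSpaceSuccEquiv_symm_sq (t : ℝ) (y : EuclideanSpace ℝ (Fin m)) :
    ‖(euclideanSpaceSuccEquiv m).symm (t, y)‖ ^ 2 = t ^ 2 + ‖y‖ ^ 2 := by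
  simp [euclideanSpaceSuccEquiv, MeasurableEquiv.prodCongr, EuclideanSpace.real_norm_sq_eq,
    Fin.sum_univ_succ]

theorem euclideanSpaceSuccEquiv_symm_mem_ball_iff (t : ℝ) (y : EuclideanSpace ℝ (Fin m)) :
    (euclideanSpaceSuccEquiv m).symm (t, y) ∈ ball 0 1 ↔ y ∈ ball 0 √(1 - t ^ 2) := by
  rw [mem_ball_zero_iff, mem_ball_zero_iff, Real.lt_sqrt (norm_nonneg _), lt_sub_iff_add_lt',
    ← norm_euclideanSpaceSuccEquiv_symm_sq, sq_lt_one_iff₀ (norm_nonneg _)]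

theorem measureReal_ball_sqrt_one_sub_sq {t : ℝ} (ht : t ∈ Set.Ioo (-1) 1) :
    volume.real (ball (0 : EuclideanSpace ℝ (Fin m)) √(1 - t ^ 2)) =
      volume.real (ball (0 : EuclideanSpace ℝ (Fin m)) 1) * √(1 - t ^ 2) ^ m := by
  have hr : 0 < √(1 - t ^ 2) := Real.sqrt_pos.2 (by nlinarith [ht.1, ht.2])
  rw [measureReal_def, Measure.addHaar_ball_of_pos _ _ hr, finrank_euclideanSpace_fin,
    ENNReal.toReal_mul, ENNReal.toReal_ofReal (by positivity), measureReal_def, mul_comm]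

theorem one_sub_sq_nonpos_of_notMem_Ioo {t : ℝ} (ht : t ∉ Set.Ioo (-1) 1) : 1 - t ^ 2 ≤ 0 := by
  rw [Set.mem_Ioo, not_and_or, not_lt, not_lt] at ht
  rcases ht with ht | ht <;> nlinarith

theorem integral_indicator_unitBall_comp_apply_zero {E : Type*} [NormedAddCommGroup E]
    [NormedSpace ℝ E] [CompleteSpace E] {f : ℝ → E} (hf : Continuous f) :
    ∫ x : EuclideanSpace ℝ (Fin (m + 1)), (ball 0 1).indicator (fun x => f (x 0)) x =
      volume.real (ball (0 : EuclideanSpace ℝ (Fin m)) 1) •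
        ∫ t in -1..1, √(1 - t ^ 2) ^ m • f t := by
  set e := euclideanSpaceSuccEquiv m
  set F : EuclideanSpace ℝ (Fin (m + 1)) → E := (ball 0 1).indicator (fun x => f (x 0))
  have hF : Integrable F := by
    refine IntegrableOn.integrable_indicator ?_ measurableSet_ball
    refine (ContinuousOn.integrableOn_compact (isCompact_closedBall 0 1) ?_).mono_set
      ball_subset_closedBall
    fun_prop
  have hFe : Integrable (F ∘ e.symm) :=
    (measurePreserving_euclideanSpaceSuccEquiv.symm e).integrable_comp_emb
      e.symm.measurableEmbedding |>.2 hF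
  have hslice (t : ℝ) : ∫ y, F (e.symm (t, y)) =
      volume.real (ball (0 : EuclideanSpace ℝ (Fin m)) √(1 - t ^ 2)) • f t := by
    classical
    rw [← integral_indicator_const _ measurableSet_ball]
    refine integral_congr_ae (.of_forall fun y => ?_)
    simp only [F, e, Set.indicator_apply, euclideanSpaceSuccEquiv_symm_mem_ball_iff,
      euclideanSpaceSuccEquiv_symm_apply_zero]
  have hvanish (t : ℝ) (ht : t ∉ Set.Ioo (-1) 1) :
      volume.real (ball (0 : EuclideanSpace ℝ (Fin m)) √(1 - t ^ 2)) • f t = 0 := by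
    rw [Real.sqrt_eq_zero'.2 (one_sub_sq_nonpos_of_notMem_Ioo ht), ball_zero, measureReal_empty,
      zero_smul]
  calc ∫ x, F x = ∫ p, F (e.symm p) :=
        ((measurePreserving_euclideanSpaceSuccEquiv.symm e).integral_comp' F).symm
    _ = ∫ t, ∫ y, F (e.symm (t, y)) := integral_prod _ hFe
    _ = ∫ t in Set.Ioo (-1) 1,
          volume.real (ball (0 : EuclideanSpace ℝ (Fin m)) √(1 - t ^ 2)) • f t := by
        simp_rw [hslice]
        exact (setIntegral_eq_integral_of_forall_compl_eq_zero hvanish).symm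
    _ = ∫ t in Set.Ioo (-1) 1,
          volume.real (ball (0 : EuclideanSpace ℝ (Fin m)) 1) • √(1 - t ^ 2) ^ m • f t := by
        refine setIntegral_congr_fun measurableSet_Ioo fun t ht => ?_
        rw [measureReal_ball_sqrt_one_sub_sq ht, mul_smul]
    _ = _ := by
        rw [integral_smul, intervalIntegral.integral_of_le (by norm_num),
          integral_Ioc_eq_integral_Ioo]

end Slicing

theorem measureReal_unitBall_pos (n : ℕ) :
    0 < volume.real (ball (0 : EuclideanSpace ℝ (Fin n)) 1) :=
  ENNReal.toReal_pos (measure_ball_pos _ _ one_pos).ne' measure_ball_lt_top.ne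

theorem ofReal_unitBallIndicator_mul (n : ℕ) (g : EuclideanSpace ℝ (Fin n) → ℂ)
    (x : EuclideanSpace ℝ (Fin n)) :
    (unitBallIndicator n x : ℂ) * g x =
      (volume.real (ball (0 : EuclideanSpace ℝ (Fin n)) 1) : ℂ)⁻¹ * (ball 0 1).indicator g x := by
  classical
  simp only [unitBallIndicator, Set.indicator_apply, measureReal_def]
  split_ifs <;> simp

theorem integral_unitBallIndicator (n : ℕ) : ∫ x, unitBallIndicator n x = 1 := by
  rw [unitBallIndicator, integral_indicator_const _ measurableSet_ball, smul_eq_mul,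
    ← measureReal_def]
  exact mul_inv_cancel₀ (measureReal_unitBall_pos n).ne'

theorem measureReal_unitBall_succ (m : ℕ) :
    volume.real (ball (0 : EuclideanSpace ℝ (Fin (m + 1))) 1) =
      volume.real (ball (0 : EuclideanSpace ℝ (Fin m)) 1) *
        (2 * ∫ t in 0..1, √(1 - t ^ 2) ^ m) := by
  have h := integral_indicator_unitBall_comp_apply_zero (m := m) (f := fun _ => (1 : ℝ))
    continuous_const
  rw [integral_indicator_const _ measurableSet_ball, smul_eq_mul, mul_one] at h
  rw [h, integral_neg_self_eq_integral_add_comp_neg (by fun_prop)]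
  simp only [smul_eq_mul, mul_one, neg_sq, ← two_mul, intervalIntegral.integral_const_mul]

theorem integral_sqrt_one_sub_sq_pow_smul_cexp (m : ℕ) (s : ℝ) :
    ∫ t in -1..1, √(1 - t ^ 2) ^ m • Complex.exp (-(Complex.I * ↑(s * t))) =
      ↑(2 * ∫ t in 0..1, √(1 - t ^ 2) ^ m * Real.cos (s * t)) := by
  rw [integral_neg_self_eq_integral_add_comp_neg (by fun_prop),
    ← intervalIntegral.integral_const_mul, ← intervalIntegral.integral_ofReal]
  refine intervalIntegral.integral_congr fun t _ => ?_
  rw [neg_sq, ← smul_add, Complex.real_smul]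
  push_cast
  rw [mul_left_comm (2 : ℂ), Complex.two_cos]
  ring_nf

theorem integral_sqrt_one_sub_sq_pow_mul_cos (m : ℕ) (s : ℝ) :
    ∫ t in 0..1, √(1 - t ^ 2) ^ m * Real.cos (s * t) =
      (∫ t in 0..1, √(1 - t ^ 2) ^ m) -
        2 * ∫ t in 0..1, √(1 - t ^ 2) ^ m * Real.sin (t * s / 2) ^ 2 := by
  simp_rw [Real.cos_eq_one_sub_two_mul_sin_half_sq, mul_comm s]
  rw [← intervalIntegral.integral_const_mul, ← intervalIntegral.integral_sub
    ((by fun_prop : Continuous _).intervalIntegrable _ _)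
    ((by fun_prop : Continuous _).intervalIntegrable _ _)]
  congr 1 with t
  ring

theorem Afun_succ (m : ℕ) (s : ℝ) :
    Afun (m + 1) s = 2 * (∫ u in 0..1, √(1 - u ^ 2) ^ m)⁻¹ *
      ∫ u in 0..1, √(1 - u ^ 2) ^ m * Real.sin (u * s / 2) ^ 2 := by
  have hw : Set.EqOn (fun u : ℝ => (1 - u ^ 2) ^ ((((m + 1 : ℕ) : ℝ) - 1) / 2))
      (fun u => √(1 - u ^ 2) ^ m) (Set.uIcc 0 1) := by
    intro u hu
    dsimp only
    rw [Set.uIcc_of_le zero_le_one] at hu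
    rw [Nat.cast_succ, add_sub_cancel_right,
      Real.rpow_natCast_div_two_eq_sqrt_pow (by nlinarith [hu.1, hu.2])]
  rw [Afun, gammaN, intervalIntegral.integral_congr hw,
    intervalIntegral.integral_congr
      (g := fun u => √(1 - u ^ 2) ^ m * Real.sin (u * s / 2) ^ 2)
      fun u hu => congrArg (· * Real.sin (u * s / 2) ^ 2) (hw hu)]

theorem integral_sqrt_one_sub_sq_pow_pos (m : ℕ) : 0 < ∫ t in 0..1, √(1 - t ^ 2) ^ m := by
  refine intervalIntegral.intervalIntegral_pos_of_pos_on
    ((by fun_prop : Continuous _).intervalIntegrable _ _) (fun t ht => ?_) zero_lt_one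
  exact pow_pos (Real.sqrt_pos.2 (by nlinarith [ht.1, ht.2])) m

theorem integral_unitBallIndicator_mul_cexp_neg_inner (m : ℕ) (ξ : EuclideanSpace ℝ (Fin (m + 1))) :
    ∫ x, (unitBallIndicator (m + 1) x : ℂ) * Complex.exp (-(Complex.I * ↑(inner ℝ x ξ))) =
      ↑((∫ t in 0..1, √(1 - t ^ 2) ^ m * Real.cos (‖ξ‖ * t)) / ∫ t in 0..1, √(1 - t ^ 2) ^ m) := by
  set V := volume.real (ball (0 : EuclideanSpace ℝ (Fin (m + 1))) 1) with hV
  calc _ = (V : ℂ)⁻¹ * ∫ x, (ball 0 1).indicator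
          (fun x => Complex.exp (-(Complex.I * ↑(inner ℝ x ξ)))) x := by
        rw [← integral_const_mul]
        exact integral_congr_ae (.of_forall fun x => ofReal_unitBallIndicator_mul (m + 1)
          (fun x => Complex.exp (-(Complex.I * ↑(inner ℝ x ξ)))) x)
    _ = (V : ℂ)⁻¹ * ∫ x, (ball 0 1).indicator
          (fun x : EuclideanSpace ℝ (Fin (m + 1)) =>
            Complex.exp (-(Complex.I * ↑(‖ξ‖ * x 0)))) x := by
        rw [integral_indicator_ball_comp_inner_eq_norm_mul_apply
          (fun t => Complex.exp (-(Complex.I * t))) 1 ξ 0]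
    _ = ↑(V⁻¹ * (volume.real (ball (0 : EuclideanSpace ℝ (Fin m)) 1) *
          (2 * ∫ t in 0..1, √(1 - t ^ 2) ^ m * Real.cos (‖ξ‖ * t)))) := by
        rw [integral_indicator_unitBall_comp_apply_zero
            (f := fun t => Complex.exp (-(Complex.I * ↑(‖ξ‖ * t)))) (by fun_prop),
          integral_sqrt_one_sub_sq_pow_smul_cexp, Complex.real_smul]
        push_cast
        ring
    _ = _ := by
        rw [hV, measureReal_unitBall_succ m, ← div_eq_inv_mul,
          mul_div_mul_left _ _ (measureReal_unitBall_pos m).ne',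
          mul_div_mul_left _ _ two_ne_zero]

theorem fourier_unitBallIndicator_eq_one_sub_A_general (n : ℕ)
    (ξ : EuclideanSpace ℝ (Fin n)) :
    ∫ x : EuclideanSpace ℝ (Fin n),
        (unitBallIndicator n x : ℂ) * Complex.exp (-(Complex.I * ((inner ℝ x ξ : ℝ) : ℂ))) =
      ((1 - Afun n ‖ξ‖ : ℝ) : ℂ) := by
  rcases n with _ | m
  · rw [Subsingleton.elim ξ 0]
    simp [Afun, integral_complex_ofReal, integral_unitBallIndicator]
  rw [integral_unitBallIndicator_mul_cexp_neg_inner, integral_sqrt_one_sub_sq_pow_mul_cos,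
    Afun_succ]
  congr 1
  generalize (∫ t in 0..1, √(1 - t ^ 2) ^ m * Real.sin (t * ‖ξ‖ / 2) ^ 2) = S
  field_simp [(integral_sqrt_one_sub_sq_pow_pos m).ne']

/-- `Î(ξ) = 1 - A(|ξ|)`, with `Î(ξ) = ∫ I(x) e^{-i x·ξ} dx`. -/
theorem fourier_unitBallIndicator_eq_one_sub_A (n : ℕ) (hn : 1 ≤ n)
    (ξ : EuclideanSpace ℝ (Fin n)) :
    ∫ x : EuclideanSpace ℝ (Fin n),
        (unitBallIndicator n x : ℂ) * Complex.exp (-(Complex.I * ((inner ℝ x ξ : ℝ) : ℂ))) =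
      ((1 - Afun n ‖ξ‖ : ℝ) : ℂ) :=
  fourier_unitBallIndicator_eq_one_sub_A_general n ξ
end

section
/- For every i ∈ N, the i-th derivative of the function s ↦ A(s)/s^2 (extended smoothly at 0) is bounded on R, i.e. sup_{s∈R} |(d/ds)^i (A(s)/s^2)| < ∞. -/
open MeasureTheory Real intervalIntegral
open scoped FourierTransform ContDiff RealInnerProductSpace

noncomputable def wfun (n : ℕ) (u : ℝ) : ℝ := (1 - u ^ 2) ^ (((n : ℝ) - 1) / 2)

lemma wfun_cont (n : ℕ) (hn : 1 ≤ n) : Continuous (wfun n) := by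
  rcases eq_or_lt_of_le hn with h1 | h1
  · have : wfun n = fun _ => 1 := by
      funext u; simp [wfun, ← h1]
    rw [this]; exact continuous_const
  · have he : (0:ℝ) < ((n : ℝ) - 1) / 2 := by
      have : (2:ℝ) ≤ (n:ℝ) := by exact_mod_cast h1
      linarith
    rw [continuous_iff_continuousAt]
    intro u
    show ContinuousAt ((fun x : ℝ => x ^ (((n:ℝ)-1)/2)) ∘ fun u : ℝ => 1 - u ^ 2) u
    exact (Real.continuousAt_rpow_const _ _ (Or.inr he.le)).comp (by fun_prop)

noncomputable def Wfun (n : ℕ) (r : ℝ) : ℝ := ∫ u in r..1, wfun n u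
noncomputable def K1fun (n : ℕ) (r : ℝ) : ℝ := ∫ u in r..1, u * wfun n u
noncomputable def Kfun (n : ℕ) (r : ℝ) : ℝ := K1fun n r - r * Wfun n r

lemma Wfun_hasDerivAt (n : ℕ) (hn : 1 ≤ n) (r : ℝ) :
    HasDerivAt (Wfun n) (-(wfun n r)) r :=
  intervalIntegral.integral_hasDerivAt_left ((wfun_cont n hn).intervalIntegrable _ _)
    ((wfun_cont n hn).stronglyMeasurableAtFilter _ _) (wfun_cont n hn).continuousAt

lemma K1fun_hasDerivAt (n : ℕ) (hn : 1 ≤ n) (r : ℝ) :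
    HasDerivAt (K1fun n) (-(r * wfun n r)) r :=
  intervalIntegral.integral_hasDerivAt_left
    ((continuous_id.mul (wfun_cont n hn)).intervalIntegrable _ _)
    ((continuous_id.mul (wfun_cont n hn)).stronglyMeasurableAtFilter _ _)
    (continuous_id.mul (wfun_cont n hn)).continuousAt

lemma Kfun_hasDerivAt (n : ℕ) (hn : 1 ≤ n) (r : ℝ) :
    HasDerivAt (Kfun n) (-(Wfun n r)) r := by
  have h := (K1fun_hasDerivAt n hn r).sub ((hasDerivAt_id r).mul (Wfun_hasDerivAt n hn r))
  refine h.congr_deriv ?_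
  simp only [id]
  ring

lemma Kfun_cont (n : ℕ) (hn : 1 ≤ n) : Continuous (Kfun n) :=
  continuous_iff_continuousAt.2 fun r => (Kfun_hasDerivAt n hn r).continuousAt

lemma Wfun_one (n : ℕ) : Wfun n 1 = 0 := intervalIntegral.integral_same
lemma Kfun_one (n : ℕ) : Kfun n 1 = 0 := by
  simp [Kfun, K1fun, Wfun, intervalIntegral.integral_same]

noncomputable def hfun (n : ℕ) (x : ℝ) : ℝ := gammaN n / 2 * Kfun n (min |x| 1)

lemma hfun_cont (n : ℕ) (hn : 1 ≤ n) : Continuous (hfun n) :=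
  continuous_const.mul ((Kfun_cont n hn).comp ((continuous_abs).min continuous_const))

lemma hfun_zero (n : ℕ) {x : ℝ} (hx : 1 ≤ |x|) : hfun n x = 0 := by
  simp [hfun, min_eq_right hx, Kfun_one]

lemma hfun_zero' (n : ℕ) {x : ℝ} (hx : x ∉ Set.Icc (-1:ℝ) 1) : hfun n x = 0 := by
  apply hfun_zero
  simp only [Set.mem_Icc, not_and_or, not_le] at hx
  rcases hx with hx | hx
  · rw [abs_of_neg (by linarith)]; linarith
  · rw [abs_of_pos (by linarith)]; linarith

lemma hfun_bound (n : ℕ) (hn : 1 ≤ n) : ∃ C : ℝ, ∀ x, |hfun n x| ≤ C := by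
  obtain ⟨C, hC⟩ := (isCompact_Icc (a := (-1:ℝ)) (b := 1)).exists_bound_of_continuousOn
    (hfun_cont n hn).continuousOn
  refine ⟨max C 0, fun x => ?_⟩
  by_cases hx : x ∈ Set.Icc (-1:ℝ) 1
  · exact le_max_of_le_left (hC x hx)
  · rw [hfun_zero' n hx]; simp

lemma norm_sin_le (w : ℂ) : ‖Complex.sin w‖ ≤ Real.exp ‖w‖ := by
  have h1 : ∀ u : ℂ, ‖Complex.exp u‖ ≤ Real.exp ‖u‖ := fun u => by
    rw [Complex.norm_exp]
    exact Real.exp_le_exp.2 ((le_abs_self u.re).trans (Complex.abs_re_le_norm u))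
  have e1 : ‖-w * Complex.I‖ = ‖w‖ := by simp
  have e2 : ‖w * Complex.I‖ = ‖w‖ := by simp
  calc ‖Complex.sin w‖
      = ‖(Complex.exp (-w * Complex.I) - Complex.exp (w * Complex.I)) * Complex.I / 2‖ := by
        rw [Complex.sin]
    _ = ‖Complex.exp (-w * Complex.I) - Complex.exp (w * Complex.I)‖ / 2 := by
        simp [norm_div, norm_mul]
    _ ≤ (Real.exp ‖w‖ + Real.exp ‖w‖) / 2 := by
        have a := h1 (-w * Complex.I); rw [e1] at a
        have b := h1 (w * Complex.I); rw [e2] at b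
        have := norm_sub_le (Complex.exp (-w * Complex.I)) (Complex.exp (w * Complex.I))
        linarith
    _ = Real.exp ‖w‖ := by ring

noncomputable def Bc (n : ℕ) (z : ℂ) : ℂ := ∫ x : ℝ, (hfun n x : ℂ) * Complex.cos (x * z)

lemma Fz_cont (n : ℕ) (hn : 1 ≤ n) (z : ℂ) :
    Continuous fun x : ℝ => (hfun n x : ℂ) * Complex.cos (x * z) := by
  apply Continuous.mul
  · exact Complex.continuous_ofReal.comp (hfun_cont n hn)
  · exact Complex.continuous_cos.comp ((Complex.continuous_ofReal).mul continuous_const)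

lemma Fz_supp (n : ℕ) (z : ℂ) :
    HasCompactSupport fun x : ℝ => (hfun n x : ℂ) * Complex.cos (x * z) := by
  apply HasCompactSupport.intro (isCompact_Icc (a := (-1:ℝ)) (b := 1))
  intro x hx
  simp [hfun_zero' n hx]

lemma Fz_int (n : ℕ) (hn : 1 ≤ n) (z : ℂ) :
    Integrable fun x : ℝ => (hfun n x : ℂ) * Complex.cos (x * z) :=
  (Fz_cont n hn z).integrable_of_hasCompactSupport (Fz_supp n z)

lemma Bc_differentiable (n : ℕ) (hn : 1 ≤ n) : Differentiable ℂ (Bc n) := by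
  intro z₀
  obtain ⟨C, hC⟩ := hfun_bound n hn
  have hC0 : 0 ≤ C := (abs_nonneg _).trans (hC 0)
  set bound : ℝ → ℝ :=
    Set.indicator (Set.Icc (-1:ℝ) 1) (fun _ => C * Real.exp (‖z₀‖ + 1)) with hbound
  have key := hasDerivAt_integral_of_dominated_loc_of_deriv_le (μ := volume)
    (F := fun (z : ℂ) (x : ℝ) => (hfun n x : ℂ) * Complex.cos (x * z))
    (F' := fun (z : ℂ) (x : ℝ) => (hfun n x : ℂ) * (-Complex.sin (x * z) * x))
    (x₀ := z₀) (bound := bound) (Metric.ball_mem_nhds z₀ one_pos)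
    (Filter.Eventually.of_forall fun z => (Fz_cont n hn z).aestronglyMeasurable)
    (Fz_int n hn z₀)
    (by
      apply Continuous.aestronglyMeasurable
      apply Continuous.mul (Complex.continuous_ofReal.comp (hfun_cont n hn))
      exact ((Complex.continuous_sin.comp
        ((Complex.continuous_ofReal).mul continuous_const)).neg).mul
        Complex.continuous_ofReal)
    (Filter.Eventually.of_forall (fun x => by
      intro z hz
      by_cases hx : x ∈ Set.Icc (-1:ℝ) 1
      · have hx1 : |x| ≤ 1 := abs_le.2 ⟨hx.1, hx.2⟩
        rw [hbound, Set.indicator_of_mem hx]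
        have hz1 : ‖z‖ ≤ ‖z₀‖ + 1 := by
          have h1 := mem_ball_iff_norm.1 hz
          have h2 := norm_add_le z₀ (z - z₀)
          rw [add_sub_cancel] at h2
          linarith
        have h1 : ‖(x:ℂ) * z‖ ≤ ‖z₀‖ + 1 := by
          rw [norm_mul, Complex.norm_real, Real.norm_eq_abs]
          calc |x| * ‖z‖ ≤ 1 * (‖z₀‖ + 1) := by
                apply mul_le_mul hx1 hz1 (norm_nonneg _) zero_le_one
            _ = ‖z₀‖ + 1 := one_mul _
        calc ‖(hfun n x : ℂ) * (-Complex.sin (x * z) * x)‖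
            = |hfun n x| * (‖Complex.sin ((x:ℂ) * z)‖ * |x|) := by
              simp [norm_mul, Complex.norm_real, Real.norm_eq_abs]
          _ ≤ C * (Real.exp (‖z₀‖ + 1) * 1) := by
              apply mul_le_mul (hC x) ?_ (by positivity) hC0
              apply mul_le_mul ((norm_sin_le _).trans (Real.exp_le_exp.2 h1)) hx1
                (abs_nonneg _) (Real.exp_nonneg _)
          _ = C * Real.exp (‖z₀‖ + 1) := by ring
      · rw [hbound, Set.indicator_of_notMem hx]
        simp [hfun_zero' n hx]))
    (by
      rw [hbound]
      rw [integrable_indicator_iff measurableSet_Icc]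
      exact integrableOn_const measure_Icc_lt_top.ne)
    (Filter.Eventually.of_forall (fun x => by
      intro z hz
      have h1 : HasDerivAt (fun z : ℂ => (x:ℂ) * z) (x:ℂ) z := by
        simpa using (hasDerivAt_id z).const_mul (x:ℂ)
      have h2 : HasDerivAt (fun z : ℂ => Complex.cos ((x:ℂ) * z))
          (-Complex.sin ((x:ℂ) * z) * x) z := by
        exact h1.ccos
      exact h2.const_mul _))
  exact key.2.differentiableAt

lemma Bc_contDiff_real (n : ℕ) (hn : 1 ≤ n) :
    ContDiff ℝ ω (fun s : ℝ => (Bc n s).re) := by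
  have hA : AnalyticOnNhd ℂ (Bc n) Set.univ :=
    Complex.analyticOnNhd_univ_iff_differentiable.2 (Bc_differentiable n hn)
  have hC : ContDiff ℝ ω (Bc n) := (hA.restrictScalars).contDiff
  exact Complex.reCLM.contDiff.comp (hC.comp Complex.ofRealCLM.contDiff)

noncomputable def g2fun (n : ℕ) (x : ℝ) : ℂ := (2 * π : ℝ) • (hfun n (2 * π * x) : ℂ)

lemma g2fun_cont (n : ℕ) (hn : 1 ≤ n) : Continuous (g2fun n) :=
  ((Complex.continuous_ofReal.comp ((hfun_cont n hn).comp
    (continuous_const.mul continuous_id)))).const_smul (2 * π : ℝ)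

lemma g2fun_supp (n : ℕ) : HasCompactSupport (g2fun n) := by
  apply HasCompactSupport.intro (isCompact_Icc (a := (-1:ℝ)) (b := 1))
  intro x hx
  have h1 : (1:ℝ) < |x| := by
    simp only [Set.mem_Icc, not_and_or, not_le] at hx
    rcases hx with h | h
    · rw [abs_of_neg (by linarith)]; linarith
    · rw [abs_of_pos (by linarith)]; linarith
  have h2 : 1 ≤ |2 * π * x| := by
    rw [abs_mul, abs_of_pos Real.two_pi_pos]
    nlinarith [Real.pi_gt_three]
  simp [g2fun, hfun_zero n h2]

lemma g2fun_moment_int (n : ℕ) (hn : 1 ≤ n) (k : ℕ) :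
    Integrable (fun x : ℝ => x ^ k • g2fun n x) := by
  apply Continuous.integrable_of_hasCompactSupport
  · exact (continuous_pow k).smul (g2fun_cont n hn)
  · exact (g2fun_supp n).smul_left (f := fun x : ℝ => x ^ k)

lemma g2fun_norm_int (n : ℕ) (hn : 1 ≤ n) (k : ℕ) :
    Integrable (fun v : ℝ => ‖v‖ ^ k * ‖g2fun n v‖) := by
  have := (g2fun_moment_int n hn k).norm
  convert this using 2 with v
  simp [norm_smul]

lemma key1 (n : ℕ) (hn : 1 ≤ n) (s : ℝ) :
    (𝓕 (g2fun n) s).re = ∫ x : ℝ, hfun n x * Real.cos (x * s) := by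
  have step1 : 𝓕 (g2fun n) s
      = ∫ v : ℝ, (2 * π : ℝ) •
        ((fun y : ℝ => Complex.exp (Complex.I * (-(y * s))) • (hfun n y : ℂ)) (2 * π * v)) := by
    rw [Real.fourier_eq']
    congr 1 with v
    rw [g2fun, smul_comm]
    congr 2
    show Complex.exp _ = Complex.exp _
    congr 1
    have hvs : (inner ℝ v s : ℝ) = v * s := by simp [mul_comm]
    rw [hvs]
    push_cast
    ring
  have step2 : 𝓕 (g2fun n) s
      = ∫ y : ℝ, Complex.exp (Complex.I * (-(y * s))) • (hfun n y : ℂ) := by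
    have hc := MeasureTheory.Measure.integral_comp_mul_left
      (fun y : ℝ => Complex.exp (Complex.I * (-(y * s))) • (hfun n y : ℂ)) (2 * π)
    rw [step1, MeasureTheory.integral_smul, hc, smul_smul,
      abs_of_pos (inv_pos.2 Real.two_pi_pos), mul_inv_cancel₀ Real.two_pi_pos.ne', one_smul]
  rw [step2]
  have hint : Integrable (fun y : ℝ => Complex.exp (Complex.I * (-(y * s))) • (hfun n y : ℂ)) := by
    apply Continuous.integrable_of_hasCompactSupport
    · apply Continuous.fun_smul
      · exact Complex.continuous_exp.comp (continuous_const.mul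
          ((Complex.continuous_ofReal.mul continuous_const).neg))
      · exact Complex.continuous_ofReal.comp (hfun_cont n hn)
    · apply HasCompactSupport.intro (isCompact_Icc (a := (-1:ℝ)) (b := 1))
      intro x hx; simp [hfun_zero' n hx]
  have hre : (∫ (y : ℝ), Complex.exp (Complex.I * -(↑y * ↑s)) • (hfun n y : ℂ)).re
      = ∫ (y : ℝ), (Complex.exp (Complex.I * -(↑y * ↑s)) • (hfun n y : ℂ)).re :=
    (Complex.reCLM.integral_comp_comm hint).symm
  rw [hre]
  congr 1 with y
  have : Complex.exp (Complex.I * (-(y * s))) • (hfun n y : ℂ)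
      = (hfun n y : ℂ) * Complex.exp ((↑(-(y * s))) * Complex.I) := by
    rw [smul_eq_mul, mul_comm]
    norm_cast
    rw [mul_comm Complex.I]
  rw [this]
  simp only [Complex.mul_re, Complex.ofReal_re, Complex.ofReal_im, Complex.exp_ofReal_mul_I_re]
  simp [Real.cos_neg]

lemma key2 (n : ℕ) (hn : 1 ≤ n) (s : ℝ) :
    (Bc n s).re = ∫ x : ℝ, hfun n x * Real.cos (x * s) := by
  rw [Bc]
  have : ∀ x : ℝ, (hfun n x : ℂ) * Complex.cos ((x : ℂ) * (s : ℂ))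
      = ((hfun n x * Real.cos (x * s) : ℝ) : ℂ) := by
    intro x
    push_cast [← Complex.ofReal_cos]
    norm_cast
  simp only [this]
  have hint2 : Integrable (fun x : ℝ => hfun n x * Real.cos (x * s)) := by
    apply Continuous.integrable_of_hasCompactSupport
    · exact (hfun_cont n hn).mul (Real.continuous_cos.comp (continuous_id.mul continuous_const))
    · apply HasCompactSupport.intro (isCompact_Icc (a := (-1:ℝ)) (b := 1))
      intro x hx; simp [hfun_zero' n hx]
  have h3 : (∫ x : ℝ, ((hfun n x * Real.cos (x * s) : ℝ) : ℂ))
      = ((∫ x : ℝ, hfun n x * Real.cos (x * s) : ℝ) : ℂ) :=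
    Complex.ofRealCLM.integral_comp_comm hint2
  rw [h3, Complex.ofReal_re]

noncomputable def Bfun (n : ℕ) (s : ℝ) : ℝ := (𝓕 (g2fun n) s).re

lemma Bfun_eq_Bc (n : ℕ) (hn : 1 ≤ n) : Bfun n = fun s : ℝ => (Bc n s).re := by
  funext s
  rw [Bfun, key1 n hn s, key2 n hn s]

lemma Bfun_contDiff (n : ℕ) (hn : 1 ≤ n) : ContDiff ℝ (⊤ : ℕ∞) (Bfun n) := by
  rw [Bfun_eq_Bc n hn]
  exact (Bc_contDiff_real n hn).of_le le_top

lemma Bfun_deriv_bound (n : ℕ) (hn : 1 ≤ n) (i : ℕ) :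
    ∃ M : ℝ, ∀ s : ℝ, |iteratedDeriv i (Bfun n) s| ≤ M := by
  have hF : ContDiff ℝ ((⊤ : ℕ∞) : WithTop ℕ∞) (𝓕 (g2fun n)) :=
    Real.contDiff_fourier (N := ⊤) (fun k _ => g2fun_norm_int n hn k)
  have hcomp : ∀ s : ℝ, iteratedDeriv i (Bfun n) s = (iteratedDeriv i (𝓕 (g2fun n)) s).re := by
    intro s
    have h := Complex.reCLM.iteratedFDeriv_comp_left (f := 𝓕 (g2fun n)) hF.contDiffAt (x := s)
      (i := i) (by exact_mod_cast le_top)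
    rw [show Bfun n = Complex.reCLM ∘ (𝓕 (g2fun n)) from rfl,
      iteratedDeriv_eq_iteratedFDeriv, iteratedDeriv_eq_iteratedFDeriv, h]
    rfl
  have hd := Real.iteratedDeriv_fourier (f := g2fun n) (N := (⊤ : ℕ∞)) (n := i)
    (fun k _ => g2fun_moment_int n hn k) (le_top)
  refine ⟨∫ x : ℝ, ‖(-2 * ↑π * Complex.I * (x:ℂ)) ^ i • g2fun n x‖, fun s => ?_⟩
  rw [hcomp s, hd]
  refine (Complex.abs_re_le_norm _).trans ?_
  exact VectorFourier.norm_fourierIntegral_le_integral_norm _ _ _ _ _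

lemma cos_cont (s : ℝ) : Continuous fun r : ℝ => Real.cos (r * s) :=
  Real.continuous_cos.comp (continuous_id.mul continuous_const)

lemma ftc_parts (n : ℕ) (hn : 1 ≤ n) {s : ℝ} (hs : s ≠ 0) :
    ∫ r in (0:ℝ)..1, (Kfun n r * Real.cos (r * s) + wfun n r * (Real.cos (r * s) / s ^ 2))
      = Wfun n 0 / s ^ 2 := by
  have hderiv : ∀ r ∈ Set.uIcc (0:ℝ) 1,
      HasDerivAt (fun r => Kfun n r * (Real.sin (r * s) / s) - Wfun n r * (Real.cos (r * s) / s ^ 2))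
        (Kfun n r * Real.cos (r * s) + wfun n r * (Real.cos (r * s) / s ^ 2)) r := by
    intro r _
    have hsin : HasDerivAt (fun r : ℝ => Real.sin (r * s)) (Real.cos (r * s) * s) r :=
      (Real.hasDerivAt_sin (r * s)).comp (h₂ := Real.sin) r (hasDerivAt_mul_const s)
    have hcos : HasDerivAt (fun r : ℝ => Real.cos (r * s)) (-Real.sin (r * s) * s) r :=
      (Real.hasDerivAt_cos (r * s)).comp (h₂ := Real.cos) r (hasDerivAt_mul_const s)
    have h1 := (Kfun_hasDerivAt n hn r).mul (hsin.div_const s)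
    have h2 := (Wfun_hasDerivAt n hn r).mul (hcos.div_const (s ^ 2))
    refine (h1.sub h2).congr_deriv ?_
    field_simp
    ring
  have hint : IntervalIntegrable
      (fun r => Kfun n r * Real.cos (r * s) + wfun n r * (Real.cos (r * s) / s ^ 2))
      MeasureTheory.volume 0 1 := by
    apply Continuous.intervalIntegrable
    exact ((Kfun_cont n hn).mul (cos_cont s)).add
      ((wfun_cont n hn).mul ((cos_cont s).div_const _))
  rw [intervalIntegral.integral_eq_sub_of_hasDerivAt hderiv hint]
  simp [Kfun_one, Wfun_one]
  ring

lemma K_cos_integral (n : ℕ) (hn : 1 ≤ n) {s : ℝ} (hs : s ≠ 0) :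
    ∫ r in (0:ℝ)..1, Kfun n r * Real.cos (r * s)
      = Wfun n 0 / s ^ 2 - (∫ r in (0:ℝ)..1, wfun n r * Real.cos (r * s)) / s ^ 2 := by
  have i1 : IntervalIntegrable (fun r => Kfun n r * Real.cos (r * s)) MeasureTheory.volume 0 1 :=
    ((Kfun_cont n hn).mul (cos_cont s)).intervalIntegrable _ _
  have i2 : IntervalIntegrable (fun r => wfun n r * (Real.cos (r * s) / s ^ 2))
      MeasureTheory.volume 0 1 :=
    ((wfun_cont n hn).mul ((cos_cont s).div_const _)).intervalIntegrable _ _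
  have h := ftc_parts n hn hs
  rw [intervalIntegral.integral_add i1 i2] at h
  have h2 : ∫ r in (0:ℝ)..1, wfun n r * (Real.cos (r * s) / s ^ 2)
      = (∫ r in (0:ℝ)..1, wfun n r * Real.cos (r * s)) / s ^ 2 := by
    rw [← intervalIntegral.integral_div]
    congr 1 with r
    ring
  rw [h2] at h
  linarith

lemma Afun_eq (n : ℕ) (hn : 1 ≤ n) (s : ℝ) :
    Afun n s = gammaN n * (Wfun n 0 - ∫ r in (0:ℝ)..1, wfun n r * Real.cos (r * s)) := by
  have hsin2 : ∀ u : ℝ, Real.sin (u * s / 2) ^ 2 = 1 / 2 - Real.cos (u * s) / 2 := by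
    intro u
    rw [Real.sin_sq_eq_half_sub]
    congr 2
    ring
  have e1 : (∫ u in (0:ℝ)..1, (1 - u ^ 2) ^ (((n : ℝ) - 1) / 2) * Real.sin (u * s / 2) ^ 2)
      = ∫ u in (0:ℝ)..1, (wfun n u - wfun n u * Real.cos (u * s)) / 2 := by
    congr 1 with u
    rw [hsin2 u]
    show wfun n u * _ = _
    ring
  rw [Afun, e1, intervalIntegral.integral_div,
    intervalIntegral.integral_sub (g := fun x => wfun n x * Real.cos (x * s)) ((wfun_cont n hn).intervalIntegrable _ _)
      (((wfun_cont n hn).mul (cos_cont s)).intervalIntegrable _ _)]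
  show 2 * gammaN n * ((Wfun n 0 - _) / 2) = _
  ring

lemma real_to_interval (n : ℕ) (hn : 1 ≤ n) (s : ℝ) :
    (∫ x : ℝ, hfun n x * Real.cos (x * s))
      = gammaN n * ∫ r in (0:ℝ)..1, Kfun n r * Real.cos (r * s) := by
  have hzero : ∀ x : ℝ, x ∉ Set.Icc (-1:ℝ) 1 → hfun n x * Real.cos (x * s) = 0 := by
    intro x hx; simp [hfun_zero' n hx]
  rw [← MeasureTheory.setIntegral_eq_integral_of_forall_compl_eq_zero hzero,
    MeasureTheory.integral_Icc_eq_integral_Ioc,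
    ← intervalIntegral.integral_of_le (by norm_num : (-1:ℝ) ≤ 1),
    ← intervalIntegral.integral_add_adjacent_intervals (a := (-1:ℝ)) (b := 0) (c := 1)
      ?_ ?_]
  · have hneg : ∫ x in (-1:ℝ)..0, hfun n x * Real.cos (x * s)
        = ∫ x in (0:ℝ)..1, hfun n x * Real.cos (x * s) := by
      have hcn := intervalIntegral.integral_comp_neg (a := (0:ℝ)) (b := 1)
        (fun x => hfun n x * Real.cos (x * s))
      rw [neg_zero] at hcn
      rw [← hcn]
      congr 1 with x
      simp [hfun, abs_neg, neg_mul, Real.cos_neg]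
    have hpos : ∫ x in (0:ℝ)..1, hfun n x * Real.cos (x * s)
        = gammaN n / 2 * ∫ r in (0:ℝ)..1, Kfun n r * Real.cos (r * s) := by
      rw [← intervalIntegral.integral_const_mul]
      apply intervalIntegral.integral_congr
      intro x hx
      rw [Set.uIcc_of_le (by norm_num : (0:ℝ) ≤ 1)] at hx
      have : min |x| 1 = x := by
        rw [abs_of_nonneg hx.1, min_eq_left hx.2]
      show hfun n x * _ = _
      rw [hfun, this]
      ring
    rw [hneg, hpos]
    ring
  · exact ((hfun_cont n hn).mul (cos_cont s)).intervalIntegrable _ _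
  · exact ((hfun_cont n hn).mul (cos_cont s)).intervalIntegrable _ _

lemma final_identity (n : ℕ) (hn : 1 ≤ n) {s : ℝ} (hs : s ≠ 0) :
    Bfun n s = Afun n s / s ^ 2 := by
  rw [Bfun, key1 n hn s, real_to_interval n hn s, K_cos_integral n hn hs, Afun_eq n hn s]
  field_simp

/-- every derivative of the smooth extension of `s ↦ A(s)/s²` is bounded on `ℝ`. -/
theorem Afun_div_sq_derivs_bounded (n : ℕ) (hn : 1 ≤ n) :
    ∃ B : ℝ → ℝ, ContDiff ℝ (⊤ : ℕ∞) B ∧ (∀ s : ℝ, s ≠ 0 → B s = Afun n s / s ^ 2) ∧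
      ∀ i : ℕ, ∃ M : ℝ, ∀ s : ℝ, |iteratedDeriv i B s| ≤ M :=
  ⟨Bfun n, Bfun_contDiff n hn, fun _ hs => final_identity n hn hs,
    fun i => Bfun_deriv_bound n hn i⟩
end
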